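/- Strictly $t$-universal Borel systems are unique up to isomorphism modulo null sets: if $(X,T)$ and $(Y,S)$ are both strictly $t$-universal, then there are invariant full sets $X_0 \subseteq X$, $Y_0 \subseteq Y$ and an equivariant Borel isomorphism between $(X_0, T)$ and $(Y_0, S)$. -/
import Mathlib


open MeasureTheory

/-- A finite measurable partition of `X`. -/
def IsFinPartition {X : Type*} [MeasurableSpace X] (P : Finset (Set X)) : Prop :=
  (∀ s ∈ P, MeasurableSet s) ∧ (P : Set (Set X)).PairwiseDisjoint id ∧
    ⋃ s ∈ P, s = Set.univ

/-- The entropy of the `n`-fold dynamical refinement of the partition `P`. -/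
noncomputable def blockEntropy {X : Type*} [MeasurableSpace X] (T : X → X)
    (μ : Measure X) (P : Finset (Set X)) (n : ℕ) : ENNReal :=
  ∑ s : Fin n → {a // a ∈ P},
    ENNReal.ofReal (Real.negMulLog ((μ (⋂ i : Fin n, T^[(i : ℕ)] ⁻¹' (s i : Set X))).toReal))

/-- The entropy rate of `T` relative to the partition `P`. -/
noncomputable def entropyRate {X : Type*} [MeasurableSpace X] (T : X → X)
    (μ : Measure X) (P : Finset (Set X)) : ENNReal :=
  ⨅ n : ℕ, blockEntropy T μ P (n + 1) / (n + 1)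

/-- The Kolmogorov–Sinai entropy of `T` with respect to `μ`: the supremum over finite
measurable partitions of the entropy rate. -/
noncomputable def ksEntropy {X : Type*} [MeasurableSpace X] (T : X → X)
    (μ : Measure X) : ENNReal :=
  ⨆ (P : Finset (Set X)) (_ : IsFinPartition P), entropyRate T μ P

/-- The Borel system `(X,T)` belongs to the class `𝓑_t`: it is free (no periodic
points) and admits no invariant Borel probability of entropy `≥ t`. -/
def MemBt {X : Type*} [MeasurableSpace X] (T : X ≃ᵐ X) (t : ℝ) : Prop :=
  (∀ x : X, ∀ n : ℕ, 1 ≤ n → T^[n] x ≠ x) ∧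
    ∀ μ : Measure X, IsProbabilityMeasure μ → MeasurePreserving T μ μ →
      ksEntropy (fun x => T x) μ < ENNReal.ofReal t

/-- `(Y,S)` embeds modulo null sets into `(X,T)`: there is an invariant full Borel set
`Y₀ ⊆ Y` and an injective equivariant Borel map from `Y₀` into `X`. -/
def EmbedsModNull {Y X : Type*} [MeasurableSpace Y] [MeasurableSpace X]
    (S : Y ≃ᵐ Y) (T : X ≃ᵐ X) : Prop :=
  ∃ Y₀ : Set Y, MeasurableSet Y₀ ∧ (∀ y ∈ Y₀, S y ∈ Y₀ ∧ S.symm y ∈ Y₀) ∧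
    (∀ μ : Measure Y, IsProbabilityMeasure μ → MeasurePreserving S μ μ → μ Y₀ᶜ = 0) ∧
    ∃ f : Y → X, Measurable f ∧ Set.InjOn f Y₀ ∧ ∀ y ∈ Y₀, f (S y) = T (f y)

/-- `(X,T)` is strictly `t`-universal: it lies in `𝓑_t` and every member of `𝓑_t`
embeds modulo null sets into it. -/
def StrictlyUniversal {X : Type*} [MeasurableSpace X] (T : X ≃ᵐ X) (t : ℝ) : Prop :=
  MemBt T t ∧
    ∀ (Y : Type) (_ : MeasurableSpace Y), StandardBorelSpace Y →
      ∀ S : Y ≃ᵐ Y, MemBt S t → EmbedsModNull S T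

lemma push_aux {X Y : Type} [MeasurableSpace X] [MeasurableSpace Y]
    {T : X → X} {S : Y → Y} (hS : Measurable S) {g : X → Y} (hg : Measurable g)
    {X₁ : Set X} {μ : Measure X} (hμp : IsProbabilityMeasure μ)
    (hμT : MeasurePreserving T μ μ) (hfull : μ X₁ᶜ = 0)
    (heqv : ∀ x ∈ X₁, g (T x) = S (g x)) :
    IsProbabilityMeasure (Measure.map g μ) ∧
      MeasurePreserving S (Measure.map g μ) (Measure.map g μ) := by
  have h1 : IsProbabilityMeasure (Measure.map g μ) := Measure.isProbabilityMeasure_map hg.aemeasurable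
  refine ⟨h1, hS, ?_⟩
  rw [Measure.map_map hS hg]
  have hae : (S ∘ g) =ᵐ[μ] (g ∘ T) := by
    rw [Filter.EventuallyEq, MeasureTheory.ae_iff]
    refine measure_mono_null ?_ hfull
    intro x hx
    simp only [Set.mem_setOf_eq, Function.comp_apply] at hx
    intro hX
    exact hx (heqv x hX).symm
  rw [Measure.map_congr hae, ← Measure.map_map hg hμT.measurable, hμT.map_eq]

def SBseq {X Y : Type} (X₁ : Set X) (Y₁ : Set Y) (f : Y → X) (g : X → Y) :
    ℕ → Set X × Set Y
  | 0 => (X₁, Y₁)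
  | n + 1 =>
      ((SBseq X₁ Y₁ f g n).1 ∩ g ⁻¹' (SBseq X₁ Y₁ f g n).2,
       (SBseq X₁ Y₁ f g n).2 ∩ f ⁻¹' (SBseq X₁ Y₁ f g n).1)

def SBA {X Y : Type} (f : Y → X) (g : X → Y) (D : Set X) : ℕ → Set X
  | 0 => D
  | n + 1 => f '' (g '' SBA f g D n)

/-- Strictly `t`-universal Borel systems are unique up to isomorphism modulo null sets:
there are invariant full Borel sets `X₀ ⊆ X`, `Y₀ ⊆ Y` and an equivariant Borel
isomorphism between them. -/
theorem strictlyUniversal_unique {t : ℝ} (ht : 0 < t)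
    {X Y : Type} [MeasurableSpace X] [StandardBorelSpace X]
    [MeasurableSpace Y] [StandardBorelSpace Y]
    (T : X ≃ᵐ X) (S : Y ≃ᵐ Y)
    (hT : StrictlyUniversal T t) (hS : StrictlyUniversal S t) :
    ∃ (X₀ : Set X) (Y₀ : Set Y),
      MeasurableSet X₀ ∧ (∀ x ∈ X₀, T x ∈ X₀ ∧ T.symm x ∈ X₀) ∧
      (∀ μ : Measure X, IsProbabilityMeasure μ → MeasurePreserving T μ μ → μ X₀ᶜ = 0) ∧
      MeasurableSet Y₀ ∧ (∀ y ∈ Y₀, S y ∈ Y₀ ∧ S.symm y ∈ Y₀) ∧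
      (∀ μ : Measure Y, IsProbabilityMeasure μ → MeasurePreserving S μ μ → μ Y₀ᶜ = 0) ∧
      ∃ f : X → Y, Measurable f ∧ Set.BijOn f X₀ Y₀ ∧
        (∀ x ∈ X₀, f (T x) = S (f x)) ∧
        ∃ g : Y → X, Measurable g ∧ ∀ x ∈ X₀, g (f x) = x := by
  obtain ⟨hTmem, hTuniv⟩ := hT
  obtain ⟨hSmem, hSuniv⟩ := hS
  obtain ⟨Y₁, hY₁m, hY₁inv, hY₁full, f, hfm, hfinj, hfeq⟩ :=
    hTuniv Y _ inferInstance S hSmem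
  obtain ⟨X₁, hX₁m, hX₁inv, hX₁full, g, hgm, hginj, hgeq⟩ :=
    hSuniv X _ inferInstance T hTmem
  rcases isEmpty_or_nonempty Y with hY | hY
  · haveI : IsEmpty X := ⟨fun x => IsEmpty.false (g x)⟩
    refine ⟨Set.univ, Set.univ, MeasurableSet.univ, fun x _ => isEmptyElim x,
      fun μ hp _ => by simp, MeasurableSet.univ, fun y _ => isEmptyElim y,
      fun μ hp _ => by simp, g, hgm, ⟨fun x _ => Set.mem_univ _, fun x => isEmptyElim x,
        fun y _ => isEmptyElim y⟩, fun x => isEmptyElim x, f, hfm, fun x => isEmptyElim x⟩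
  · haveI : Nonempty X := ⟨f (Classical.arbitrary Y)⟩
    classical
    -- symmetric-equivariance helpers
    have hg_symm : ∀ x ∈ X₁, g (T.symm x) = S.symm (g x) := by
      intro x hx
      have h1 : g (T (T.symm x)) = S (g (T.symm x)) := hgeq _ (hX₁inv x hx).2
      rw [T.apply_symm_apply] at h1
      rw [h1, S.symm_apply_apply]
    have hf_symm : ∀ y ∈ Y₁, f (S.symm y) = T.symm (f y) := by
      intro y hy
      have h1 : f (S (S.symm y)) = T (f (S.symm y)) := hfeq _ (hY₁inv y hy).2
      rw [S.apply_symm_apply] at h1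
      rw [h1, T.symm_apply_apply]
    set XS : ℕ → Set X := fun n => (SBseq X₁ Y₁ f g n).1 with hXS
    set YS : ℕ → Set Y := fun n => (SBseq X₁ Y₁ f g n).2 with hYS
    have hXS0 : XS 0 = X₁ := rfl
    have hYS0 : YS 0 = Y₁ := rfl
    have hXSsucc : ∀ n, XS (n + 1) = XS n ∩ g ⁻¹' YS n := fun n => rfl
    have hYSsucc : ∀ n, YS (n + 1) = YS n ∩ f ⁻¹' XS n := fun n => rfl
    have h_sub1 : ∀ n, XS n ⊆ X₁ ∧ YS n ⊆ Y₁ := by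
      intro n
      induction n with
      | zero => exact ⟨subset_rfl, subset_rfl⟩
      | succ n ih =>
        rw [hXSsucc, hYSsucc]
        exact ⟨(Set.inter_subset_left).trans ih.1, (Set.inter_subset_left).trans ih.2⟩
    have h_meas : ∀ n, MeasurableSet (XS n) ∧ MeasurableSet (YS n) := by
      intro n
      induction n with
      | zero => exact ⟨hX₁m, hY₁m⟩
      | succ n ih =>
        rw [hXSsucc, hYSsucc]
        exact ⟨ih.1.inter (hgm ih.2), ih.2.inter (hfm ih.1)⟩
    have h_inv : ∀ n, (∀ x ∈ XS n, T x ∈ XS n ∧ T.symm x ∈ XS n) ∧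
        (∀ y ∈ YS n, S y ∈ YS n ∧ S.symm y ∈ YS n) := by
      intro n
      induction n with
      | zero => exact ⟨hX₁inv, hY₁inv⟩
      | succ n ih =>
        constructor
        · intro x hx
          rw [hXSsucc] at hx ⊢
          obtain ⟨hx1, hx2⟩ := hx
          have hX1 : x ∈ X₁ := (h_sub1 n).1 hx1
          constructor
          · refine ⟨(ih.1 x hx1).1, ?_⟩
            have : g (T x) = S (g x) := hgeq x hX1
            simp only [Set.mem_preimage, this]
            exact (ih.2 _ hx2).1
          · refine ⟨(ih.1 x hx1).2, ?_⟩
            have : g (T.symm x) = S.symm (g x) := hg_symm x hX1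
            simp only [Set.mem_preimage, this]
            exact (ih.2 _ hx2).2
        · intro y hy
          rw [hYSsucc] at hy ⊢
          obtain ⟨hy1, hy2⟩ := hy
          have hY1 : y ∈ Y₁ := (h_sub1 n).2 hy1
          constructor
          · refine ⟨(ih.2 y hy1).1, ?_⟩
            have : f (S y) = T (f y) := hfeq y hY1
            simp only [Set.mem_preimage, this]
            exact (ih.1 _ hy2).1
          · refine ⟨(ih.2 y hy1).2, ?_⟩
            have : f (S.symm y) = T.symm (f y) := hf_symm y hY1
            simp only [Set.mem_preimage, this]
            exact (ih.1 _ hy2).2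
    have h_full : ∀ n,
        (∀ μ : Measure X, IsProbabilityMeasure μ → MeasurePreserving T μ μ → μ (XS n)ᶜ = 0) ∧
        (∀ ν : Measure Y, IsProbabilityMeasure ν → MeasurePreserving S ν ν → ν (YS n)ᶜ = 0) := by
      intro n
      induction n with
      | zero => exact ⟨hX₁full, hY₁full⟩
      | succ n ih =>
        constructor
        · intro μ hp hmp
          rw [hXSsucc, Set.compl_inter]
          refine measure_union_null (ih.1 μ hp hmp) ?_
          obtain ⟨hp', hmp'⟩ := push_aux S.measurable hgm hp hmp (hX₁full μ hp hmp) hgeq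
          rw [← Set.preimage_compl, ← Measure.map_apply hgm (h_meas n).2.compl]
          exact ih.2 _ hp' hmp'
        · intro ν hp hmp
          rw [hYSsucc, Set.compl_inter]
          refine measure_union_null (ih.2 ν hp hmp) ?_
          obtain ⟨hp', hmp'⟩ := push_aux T.measurable hfm hp hmp (hY₁full ν hp hmp) hfeq
          rw [← Set.preimage_compl, ← Measure.map_apply hfm (h_meas n).1.compl]
          exact ih.1 _ hp' hmp'
    set Xinf : Set X := ⋂ n, XS n with hXinf
    set Yinf : Set Y := ⋂ n, YS n with hYinf
    have hXinf_m : MeasurableSet Xinf := MeasurableSet.iInter fun n => (h_meas n).1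
    have hYinf_m : MeasurableSet Yinf := MeasurableSet.iInter fun n => (h_meas n).2
    have hXinf_sub1 : Xinf ⊆ X₁ := Set.iInter_subset XS 0
    have hYinf_sub1 : Yinf ⊆ Y₁ := Set.iInter_subset YS 0
    have hXinf_inv : ∀ x ∈ Xinf, T x ∈ Xinf ∧ T.symm x ∈ Xinf := by
      intro x hx
      rw [Set.mem_iInter] at hx
      constructor <;> rw [Set.mem_iInter] <;> intro n
      · exact ((h_inv n).1 x (hx n)).1
      · exact ((h_inv n).1 x (hx n)).2
    have hYinf_inv : ∀ y ∈ Yinf, S y ∈ Yinf ∧ S.symm y ∈ Yinf := by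
      intro y hy
      rw [Set.mem_iInter] at hy
      constructor <;> rw [Set.mem_iInter] <;> intro n
      · exact ((h_inv n).2 y (hy n)).1
      · exact ((h_inv n).2 y (hy n)).2
    have hXinf_full : ∀ μ : Measure X, IsProbabilityMeasure μ → MeasurePreserving T μ μ →
        μ Xinfᶜ = 0 := by
      intro μ hp hmp
      rw [hXinf, Set.compl_iInter]
      exact measure_iUnion_null fun n => (h_full n).1 μ hp hmp
    have hYinf_full : ∀ ν : Measure Y, IsProbabilityMeasure ν → MeasurePreserving S ν ν →
        ν Yinfᶜ = 0 := by
      intro ν hp hmp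
      rw [hYinf, Set.compl_iInter]
      exact measure_iUnion_null fun n => (h_full n).2 ν hp hmp
    have hfY : Set.MapsTo f Yinf Xinf := by
      intro y hy
      rw [Set.mem_iInter] at hy ⊢
      intro n
      have := hy (n + 1)
      rw [hYSsucc] at this
      exact this.2
    have hgX : Set.MapsTo g Xinf Yinf := by
      intro x hx
      rw [Set.mem_iInter] at hx ⊢
      intro n
      have := hx (n + 1)
      rw [hXSsucc] at this
      exact this.2
    -- embeddings
    haveI iY : StandardBorelSpace ↥Yinf := hYinf_m.standardBorel
    haveI iX : StandardBorelSpace ↥Xinf := hXinf_m.standardBorel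
    have hfe : MeasurableEmbedding (fun y : ↥Yinf => f y) :=
      (hfm.comp measurable_subtype_coe).measurableEmbedding
        (fun a b h => Subtype.ext (hfinj (hYinf_sub1 a.2) (hYinf_sub1 b.2) h))
    have hge : MeasurableEmbedding (fun x : ↥Xinf => g x) :=
      (hgm.comp measurable_subtype_coe).measurableEmbedding
        (fun a b h => Subtype.ext (hginj (hXinf_sub1 a.2) (hXinf_sub1 b.2) h))
    have himage_f : ∀ s : Set Y, s ⊆ Yinf → MeasurableSet s → MeasurableSet (f '' s) := by
      intro s hs hsm
      have : f '' s = (fun y : ↥Yinf => f y) '' (Subtype.val ⁻¹' s) := by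
        ext x
        constructor
        · rintro ⟨y, hy, rfl⟩; exact ⟨⟨y, hs hy⟩, hy, rfl⟩
        · rintro ⟨y, hy, rfl⟩; exact ⟨y.1, hy, rfl⟩
      rw [this]
      exact hfe.measurableSet_image' (measurable_subtype_coe hsm)
    have himage_g : ∀ s : Set X, s ⊆ Xinf → MeasurableSet s → MeasurableSet (g '' s) := by
      intro s hs hsm
      have : g '' s = (fun x : ↥Xinf => g x) '' (Subtype.val ⁻¹' s) := by
        ext y
        constructor
        · rintro ⟨x, hx, rfl⟩; exact ⟨⟨x, hs hx⟩, hx, rfl⟩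
        · rintro ⟨x, hx, rfl⟩; exact ⟨x.1, hx, rfl⟩
      rw [this]
      exact hge.measurableSet_image' (measurable_subtype_coe hsm)
    -- invariance of f '' Yinf
    have hfYinf_inv : ∀ x ∈ f '' Yinf, T x ∈ f '' Yinf ∧ T.symm x ∈ f '' Yinf := by
      rintro x ⟨y, hy, rfl⟩
      constructor
      · exact ⟨S y, (hYinf_inv y hy).1, hfeq y (hYinf_sub1 hy)⟩
      · exact ⟨S.symm y, (hYinf_inv y hy).2, hf_symm y (hYinf_sub1 hy)⟩
    set D : Set X := Xinf \ f '' Yinf with hD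
    set A : ℕ → Set X := SBA f g D with hA
    have hA0 : A 0 = D := rfl
    have hAsucc : ∀ n, A (n + 1) = f '' (g '' A n) := fun n => rfl
    have hgim : ∀ s : Set X, s ⊆ Xinf → g '' s ⊆ Yinf := by
      rintro s hs y ⟨a, ha, rfl⟩; exact hgX (hs ha)
    have hfim : ∀ s : Set Y, s ⊆ Yinf → f '' s ⊆ Xinf := by
      rintro s hs x ⟨y, hy, rfl⟩; exact hfY (hs hy)
    have hA_sub : ∀ n, A n ⊆ Xinf := by
      intro n
      induction n with
      | zero => exact Set.diff_subset
      | succ n ih =>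
        rw [hAsucc]
        exact hfim _ (hgim _ ih)
    have hA_meas : ∀ n, MeasurableSet (A n) := by
      intro n
      induction n with
      | zero => exact hXinf_m.diff (himage_f Yinf subset_rfl hYinf_m)
      | succ n ih =>
        rw [hAsucc]
        exact himage_f _ (hgim _ (hA_sub n)) (himage_g _ (hA_sub n) ih)
    have hA_inv : ∀ n, ∀ x ∈ A n, T x ∈ A n ∧ T.symm x ∈ A n := by
      intro n
      induction n with
      | zero =>
        intro x hx
        rw [hA0, hD] at hx ⊢
        obtain ⟨hx1, hx2⟩ := hx
        constructor
        · exact ⟨(hXinf_inv x hx1).1, fun h => hx2 (by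
            have := (hfYinf_inv _ h).2
            rwa [T.symm_apply_apply] at this)⟩
        · exact ⟨(hXinf_inv x hx1).2, fun h => hx2 (by
            have := (hfYinf_inv _ h).1
            rwa [T.apply_symm_apply] at this)⟩
      | succ n ih =>
        rintro x hx
        rw [hAsucc] at hx ⊢
        obtain ⟨ya, ⟨a, ha, rfl⟩, rfl⟩ := hx
        have haX : a ∈ Xinf := hA_sub n ha
        have hgaY : g a ∈ Yinf := hgX haX
        constructor
        · refine ⟨g (T a), ⟨T a, (ih a ha).1, rfl⟩, ?_⟩
          rw [hgeq a (hXinf_sub1 haX), hfeq (g a) (hYinf_sub1 hgaY)]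
        · refine ⟨g (T.symm a), ⟨T.symm a, (ih a ha).2, rfl⟩, ?_⟩
          rw [hg_symm a (hXinf_sub1 haX), hf_symm (g a) (hYinf_sub1 hgaY)]
    set Ainf : Set X := ⋃ n, A n with hAinf
    have hAinf_sub : Ainf ⊆ Xinf := Set.iUnion_subset hA_sub
    have hAinf_m : MeasurableSet Ainf := MeasurableSet.iUnion hA_meas
    have hAinf_inv : ∀ x ∈ Ainf, T x ∈ Ainf ∧ T.symm x ∈ Ainf := by
      intro x hx
      rw [Set.mem_iUnion] at hx
      obtain ⟨n, hn⟩ := hx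
      exact ⟨Set.mem_iUnion.mpr ⟨n, (hA_inv n x hn).1⟩,
        Set.mem_iUnion.mpr ⟨n, (hA_inv n x hn).2⟩⟩
    have hAfg : ∀ x ∈ Ainf, f (g x) ∈ Ainf := by
      intro x hx
      rw [Set.mem_iUnion] at hx
      obtain ⟨n, hn⟩ := hx
      exact Set.mem_iUnion.mpr ⟨n + 1, by rw [hAsucc]; exact ⟨g x, ⟨x, hn, rfl⟩, rfl⟩⟩
    have hcompl : ∀ x ∈ Xinf, x ∉ Ainf → x ∈ f '' Yinf := by
      intro x hx hxa
      by_contra h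
      exact hxa (Set.mem_iUnion.mpr ⟨0, ⟨hx, h⟩⟩)
    -- inverses
    set fInv : X → Y :=
      Function.extend (fun y : ↥Yinf => f y) Subtype.val (fun _ => Classical.arbitrary Y)
      with hfInv_def
    have hfInv_m : Measurable fInv :=
      hfe.measurable_extend measurable_subtype_coe measurable_const
    have hfInv : ∀ y ∈ Yinf, fInv (f y) = y := by
      intro y hy
      have := hfe.injective.extend_apply Subtype.val
        (fun _ => Classical.arbitrary Y) (⟨y, hy⟩ : ↥Yinf)
      exact this
    set gInv : Y → X :=
      Function.extend (fun x : ↥Xinf => g x) Subtype.val (fun _ => Classical.arbitrary X)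
      with hgInv_def
    have hgInv_m : Measurable gInv :=
      hge.measurable_extend measurable_subtype_coe measurable_const
    have hgInv : ∀ x ∈ Xinf, gInv (g x) = x := by
      intro x hx
      exact hge.injective.extend_apply Subtype.val
        (fun _ => Classical.arbitrary X) (⟨x, hx⟩ : ↥Xinf)
    set gA : Set Y := g '' Ainf with hgA
    have hgA_m : MeasurableSet gA := himage_g Ainf hAinf_sub hAinf_m
    set F : X → Y := Ainf.piecewise g fInv with hF_def
    have hF_m : Measurable F := Measurable.piecewise hAinf_m hgm hfInv_m
    set G : Y → X := gA.piecewise gInv f with hG_def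
    have hG_m : Measurable G := Measurable.piecewise hgA_m hgInv_m hfm
    have hF_in : ∀ x ∈ Ainf, F x = g x := fun x hx => Set.piecewise_eq_of_mem _ _ _ hx
    have hF_out : ∀ x ∉ Ainf, F x = fInv x := fun x hx => Set.piecewise_eq_of_notMem _ _ _ hx
    -- f y never lands in Ainf when y ∉ gA, y ∈ Yinf
    have hfy_not_A : ∀ y ∈ Yinf, y ∉ gA → f y ∉ Ainf := by
      intro y hy hygA hfyA
      rw [Set.mem_iUnion] at hfyA
      obtain ⟨n, hn⟩ := hfyA
      cases n with
      | zero => exact hn.2 ⟨y, hy, rfl⟩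
      | succ n =>
        rw [hAsucc] at hn
        obtain ⟨ya, ⟨a, ha, rfl⟩, hfy⟩ := hn
        have hgaY : g a ∈ Yinf := hgX (hA_sub n ha)
        have : g a = y := hfinj (hYinf_sub1 hgaY) (hYinf_sub1 hy) hfy
        exact hygA ⟨a, Set.mem_iUnion.mpr ⟨n, ha⟩, this⟩
    -- MapsTo
    have hmaps : Set.MapsTo F Xinf Yinf := by
      intro x hx
      by_cases hxa : x ∈ Ainf
      · rw [hF_in x hxa]; exact hgX hx
      · obtain ⟨y, hy, rfl⟩ := hcompl x hx hxa
        rw [hF_out _ hxa, hfInv y hy]; exact hy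
    -- InjOn
    have hinj : Set.InjOn F Xinf := by
      intro a ha b hb hab
      by_cases haA : a ∈ Ainf <;> by_cases hbA : b ∈ Ainf
      · rw [hF_in a haA, hF_in b hbA] at hab
        exact hginj (hXinf_sub1 ha) (hXinf_sub1 hb) hab
      · obtain ⟨yb, hyb, rfl⟩ := hcompl b hb hbA
        rw [hF_in a haA, hF_out _ hbA, hfInv yb hyb] at hab
        exact absurd (hab ▸ hAfg a haA) hbA
      · obtain ⟨ya, hya, rfl⟩ := hcompl a ha haA
        rw [hF_out _ haA, hfInv ya hya, hF_in b hbA] at hab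
        exact absurd (hab ▸ hAfg b hbA) haA
      · obtain ⟨ya, hya, rfl⟩ := hcompl a ha haA
        obtain ⟨yb, hyb, rfl⟩ := hcompl b hb hbA
        rw [hF_out _ haA, hF_out _ hbA, hfInv ya hya, hfInv yb hyb] at hab
        rw [hab]
    -- SurjOn
    have hsurj : Set.SurjOn F Xinf Yinf := by
      intro y hy
      by_cases hygA : y ∈ gA
      · obtain ⟨a, ha, rfl⟩ := hygA
        exact ⟨a, hAinf_sub ha, hF_in a ha⟩
      · refine ⟨f y, hfY hy, ?_⟩
        rw [hF_out _ (hfy_not_A y hy hygA), hfInv y hy]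
    -- equivariance
    have heqv : ∀ x ∈ Xinf, F (T x) = S (F x) := by
      intro x hx
      by_cases hxa : x ∈ Ainf
      · rw [hF_in x hxa, hF_in _ (hAinf_inv x hxa).1, hgeq x (hXinf_sub1 hx)]
      · obtain ⟨y, hy, rfl⟩ := hcompl x hx hxa
        have hTx : T (f y) ∉ Ainf := fun h => hxa (by
          have := (hAinf_inv _ h).2
          rwa [T.symm_apply_apply] at this)
        rw [hF_out _ hxa, hfInv y hy, hF_out _ hTx, ← hfeq y (hYinf_sub1 hy),
          hfInv _ (hYinf_inv y hy).1]
    -- left inverse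
    have hleft : ∀ x ∈ Xinf, G (F x) = x := by
      intro x hx
      by_cases hxa : x ∈ Ainf
      · rw [hF_in x hxa, hG_def, Set.piecewise_eq_of_mem _ _ _ (Set.mem_image_of_mem g hxa),
          hgInv x hx]
      · obtain ⟨y, hy, rfl⟩ := hcompl x hx hxa
        rw [hF_out _ hxa, hfInv y hy]
        have hynot : y ∉ gA := by
          rintro ⟨a, ha, rfl⟩
          exact hxa (hAfg a ha)
        rw [hG_def, Set.piecewise_eq_of_notMem _ _ _ hynot]
    exact ⟨Xinf, Yinf, hXinf_m, hXinf_inv, hXinf_full, hYinf_m, hYinf_inv, hYinf_full,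
      F, hF_m, ⟨hmaps, hinj, hsurj⟩, heqv, G, hG_m, hleft⟩
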